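/- (De Bruijn identity) Let n ≥ 1 and let φ_1, …, φ_{2n} be integrable functions on a measure space (C, μ), and let S(x,y) be an antisymmetric kernel such that all the iterated integrals below converge absolutely. Then ∫⋯∫ ∏_{ℓ=1}^{2n} φ_ℓ(X_ℓ) dμ(X_1)⋯dμ(X_{2n}) · Pf[S(X_i, X_j)]_{i,j=1}^{2n} = Pf[ ∫∫ φ_i(v) φ_j(w) S(v,w) dμ(v) dμ(w) ]_{i,j=1}^{2n}. -/

import Mathlib

/-!
Expanding the Pfaffian over permutations, the integrand becomes a sum over `σ ∈ S_{2n}` of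
`sgn σ` times a product of `n` factors
`φ_{σ(2k)}(X_{σ(2k)}) φ_{σ(2k+1)}(X_{σ(2k+1)}) S(X_{σ(2k)}, X_{σ(2k+1)})`,
each depending on its own pair of coordinates. Regrouping the `2n` coordinates into these `n`
pairs is measure preserving, so by Fubini the `σ`-term integrates to the product of the `n`
double integrals, which is the `σ`-term of the Pfaffian on the right.
-/

open MeasureTheory BigOperators

/-- The Pfaffian of a 2n×2n matrix:
`Pf[A] = (1/(2^n n!)) Σ_{σ ∈ S_{2n}} sgn(σ) ∏_{k=1}^n A_{σ(2k-1),σ(2k)}`. -/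
noncomputable def Pf {n : ℕ} (A : Matrix (Fin (2 * n)) (Fin (2 * n)) ℝ) : ℝ :=
  (1 / ((2 : ℝ) ^ n * n.factorial)) *
    ∑ σ : Equiv.Perm (Fin (2 * n)),
      ((Equiv.Perm.sign σ : ℤ) : ℝ) *
        ∏ k : Fin n,
          A (σ ⟨2 * (k : ℕ), by have := k.isLt; omega⟩)
            (σ ⟨2 * (k : ℕ) + 1, by have := k.isLt; omega⟩)

def finSumFinEquivEvenOdd (n : ℕ) : Fin n ⊕ Fin n ≃ Fin (2 * n) where
  toFun := Sum.elim (fun k => ⟨2 * (k : ℕ), by omega⟩) (fun k => ⟨2 * (k : ℕ) + 1, by omega⟩)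
  invFun x :=
    if (x : ℕ) % 2 = 0 then .inl ⟨(x : ℕ) / 2, by omega⟩ else .inr ⟨(x : ℕ) / 2, by omega⟩
  left_inv := by
    rintro (⟨k, hk⟩ | ⟨k, hk⟩) <;> simp only [Sum.elim_inl, Sum.elim_inr] <;>
      split_ifs <;> simp <;> omega
  right_inv := by
    rintro ⟨x, hx⟩
    dsimp only
    split_ifs <;> simp <;> omega

theorem Pf_eq_sum_perm {n : ℕ} (A : Matrix (Fin (2 * n)) (Fin (2 * n)) ℝ) :
    Pf A = 1 / ((2 : ℝ) ^ n * n.factorial) *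
      ∑ σ : Equiv.Perm (Fin (2 * n)), ((Equiv.Perm.sign σ : ℤ) : ℝ) *
        ∏ k, A (σ (finSumFinEquivEvenOdd n (.inl k))) (σ (finSumFinEquivEvenOdd n (.inr k))) :=
  rfl

theorem Fintype.prod_mul_prod_pairs {M ι κ : Type*} [CommMonoid M] [Fintype ι] [Fintype κ]
    (e : ι ⊕ ι ≃ κ) (f : κ → M) (g : ι → M) :
    (∏ l, f l) * ∏ k, g k = ∏ k, f (e (.inl k)) * f (e (.inr k)) * g k := by
  rw [← e.prod_comp, Fintype.prod_sum_type, ← Finset.prod_mul_distrib,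
    ← Finset.prod_mul_distrib]

section PiPairs

variable {C ι κ : Type*} [MeasurableSpace C]

def MeasurableEquiv.piPairs (e : ι ⊕ ι ≃ κ) : (ι → C × C) ≃ᵐ (κ → C) :=
  (MeasurableEquiv.arrowProdEquivProdArrow C C ι).trans <|
    (MeasurableEquiv.sumPiEquivProdPi fun _ : ι ⊕ ι => C).symm.trans <|
      MeasurableEquiv.piCongrLeft (fun _ => C) e

@[simp]
theorem MeasurableEquiv.piPairs_apply (e : ι ⊕ ι ≃ κ) (W : ι → C × C) (j : ι ⊕ ι) :
    piPairs e W (e j) = Sum.elim (fun k => (W k).1) (fun k => (W k).2) j := by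
  change Equiv.piCongrLeft (fun _ => C) e _ (e _) = _
  rw [Equiv.piCongrLeft_apply_apply]
  cases j <;> rfl

theorem prod_pairs_piPairs [Fintype ι] {M : Type*} [CommMonoid M] (e : ι ⊕ ι ≃ κ)
    (g : ι → C → C → M) (W : ι → C × C) :
    ∏ k, g k (MeasurableEquiv.piPairs e W (e (.inl k)))
        (MeasurableEquiv.piPairs e W (e (.inr k))) =
      ∏ k, Function.uncurry (g k) (W k) := by
  simp only [MeasurableEquiv.piPairs_apply]
  rfl

theorem measurePreserving_piPairs [Fintype ι] [Fintype κ] (μ : Measure C) [SigmaFinite μ]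
    (e : ι ⊕ ι ≃ κ) :
    MeasurePreserving (MeasurableEquiv.piPairs e) (Measure.pi fun _ => μ.prod μ)
      (Measure.pi fun _ => μ) :=
  (measurePreserving_piCongrLeft (fun _ => μ) e).comp <|
    (measurePreserving_sumPiEquivProdPi_symm fun _ => μ).comp <|
      measurePreserving_arrowProdEquivProdArrow C C ι (fun _ => μ) fun _ => μ

variable [Fintype ι] [Fintype κ] {𝕜 : Type*} [RCLike 𝕜] (μ : Measure C) [SigmaFinite μ]

theorem integrable_prod_pairs (e : ι ⊕ ι ≃ κ) {g : ι → C → C → 𝕜}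
    (hg : ∀ k, Integrable (Function.uncurry (g k)) (μ.prod μ)) :
    Integrable (fun X : κ → C => ∏ k, g k (X (e (.inl k))) (X (e (.inr k))))
      (Measure.pi fun _ => μ) := by
  rw [← (measurePreserving_piPairs μ e).integrable_comp_emb
    (MeasurableEquiv.measurableEmbedding _)]
  simp only [Function.comp_def, prod_pairs_piPairs]
  exact Integrable.fintype_prod hg

theorem integral_prod_pairs (e : ι ⊕ ι ≃ κ) {g : ι → C → C → 𝕜}
    (hg : ∀ k, Integrable (Function.uncurry (g k)) (μ.prod μ)) :
    ∫ X : κ → C, ∏ k, g k (X (e (.inl k))) (X (e (.inr k))) ∂(Measure.pi fun _ => μ) =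
      ∏ k, ∫ v, ∫ w, g k v w ∂μ ∂μ := by
  rw [← (measurePreserving_piPairs μ e).integral_comp']
  simp only [prod_pairs_piPairs]
  exact (integral_fintype_prod_eq_prod _).trans
    (Finset.prod_congr rfl fun k _ => integral_prod _ (hg k))

end PiPairs

theorem de_bruijn_general {C : Type*} [MeasurableSpace C] (μ : Measure C) [SigmaFinite μ]
    (n : ℕ) (φ : Fin (2 * n) → C → ℝ)
    (S : C → C → ℝ)
    (hR : ∀ i j, Integrable
      (fun p : C × C => φ i p.1 * φ j p.2 * S p.1 p.2) (μ.prod μ)) :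
    (∫ X : Fin (2 * n) → C,
        (∏ ℓ, φ ℓ (X ℓ)) * Pf (Matrix.of fun i j => S (X i) (X j))
        ∂(Measure.pi fun _ => μ)) =
      Pf (Matrix.of fun i j => ∫ v, ∫ w, φ i v * φ j w * S v w ∂μ ∂μ) := by
  set e := finSumFinEquivEvenOdd n
  set c : ℝ := 1 / ((2 : ℝ) ^ n * n.factorial)
  let F (σ : Equiv.Perm (Fin (2 * n))) (k : Fin n) (v w : C) : ℝ :=
    φ (σ (e (.inl k))) v * φ (σ (e (.inr k))) w * S v w
  have hF (σ) (k) : Integrable (Function.uncurry (F σ k)) (μ.prod μ) := hR _ _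
  have hexpand (X : Fin (2 * n) → C) :
      (∏ ℓ, φ ℓ (X ℓ)) * Pf (Matrix.of fun i j => S (X i) (X j)) =
        ∑ σ, c * (Equiv.Perm.sign σ : ℝ) *
          ∏ k, F σ k (X (e.trans σ (.inl k))) (X (e.trans σ (.inr k))) := by
    rw [Pf_eq_sum_perm, Finset.mul_sum, Finset.mul_sum]
    refine Finset.sum_congr rfl fun σ _ => ?_
    rw [mul_left_comm, mul_left_comm (∏ ℓ, _), Fintype.prod_mul_prod_pairs (e.trans σ),
      mul_assoc]
    rfl
  simp_rw [hexpand]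
  rw [integral_finsetSum _ fun σ _ => (integrable_prod_pairs μ (e.trans σ) (hF σ)).const_mul _]
  simp_rw [integral_const_mul, integral_prod_pairs μ (_ : Fin n ⊕ Fin n ≃ _) (hF _)]
  rw [Pf_eq_sum_perm, Finset.mul_sum]
  exact Finset.sum_congr rfl fun σ _ => mul_assoc _ _ _

/-- De Bruijn's identity: integrating a product of functions against the Pfaffian
of an antisymmetric kernel yields the Pfaffian of the matrix of double integrals. -/
theorem de_bruijn {C : Type*} [MeasurableSpace C] (μ : Measure C) [SigmaFinite μ]
    (n : ℕ) (hn : 1 ≤ n) (φ : Fin (2 * n) → C → ℝ)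
    (hφ : ∀ i, Integrable (φ i) μ)
    (S : C → C → ℝ)
    (hS : ∀ x y, S x y = -S y x)
    (hL : Integrable
      (fun X : Fin (2 * n) → C =>
        (∏ ℓ, φ ℓ (X ℓ)) * Pf (Matrix.of fun i j => S (X i) (X j)))
      (Measure.pi fun _ => μ))
    (hR : ∀ i j, Integrable
      (fun p : C × C => φ i p.1 * φ j p.2 * S p.1 p.2) (μ.prod μ)) :
    (∫ X : Fin (2 * n) → C,
        (∏ ℓ, φ ℓ (X ℓ)) * Pf (Matrix.of fun i j => S (X i) (X j))
        ∂(Measure.pi fun _ => μ)) =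
      Pf (Matrix.of fun i j => ∫ v, ∫ w, φ i v * φ j w * S v w ∂μ ∂μ) :=
  de_bruijn_general μ n φ S hR
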